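/- arXiv:cs/0003051 — 3 statements merged into one kernel-verified Lean document; each statement's English description precedes it below -/
import Mathlib

section
/- If σ is an incision function for a finite belief base B and α ∉ Cn(∅), then B \ σ(B ⊥⊥ α) does not entail α, i.e., α ∉ Cn(B \ σ(B ⊥⊥ α)). -/
inductive PropForm (V : Type) : Type
  | var : V → PropForm V
  | fls : PropForm V
  | neg : PropForm V → PropForm V
  | conj : PropForm V → PropForm V → PropForm V
  | disj : PropForm V → PropForm V → PropForm V
  | impl : PropForm V → PropForm V → PropForm V

namespace PropForm
def eval {V : Type} (v : V → Prop) : PropForm V → Prop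
  | var x => v x
  | fls => False
  | neg φ => ¬ eval v φ
  | conj φ ψ => eval v φ ∧ eval v ψ
  | disj φ ψ => eval v φ ∨ eval v ψ
  | impl φ ψ => eval v φ → eval v ψ
end PropForm

/-- `α ∈ Cn(X)`: classical propositional consequence. -/
def Entails {V : Type} (X : Set (PropForm V)) (α : PropForm V) : Prop :=
  ∀ v : V → Prop, (∀ φ ∈ X, φ.eval v) → α.eval v

def Consistent {V : Type} (X : Set (PropForm V)) : Prop :=
  ∃ v : V → Prop, ∀ φ ∈ X, φ.eval v

/-- `B ⊥⊥ α`: the set of α-kernels (minimal subsets of B entailing α). -/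
def Kernel {V : Type} (B : Set (PropForm V)) (α : PropForm V) :
    Set (Set (PropForm V)) :=
  {X | X ⊆ B ∧ Entails X α ∧ ∀ Y, Y ⊂ X → ¬ Entails Y α}

/-!
If `α` still followed from `B \ σ(B ⊥⊥ α)`, this finite set would contain a minimal subset
entailing `α`, i.e. an `α`-kernel of `B` disjoint from `σ(B ⊥⊥ α)`. That kernel is nonempty
because `α` is not a tautology, so the incision function must cut it: contradiction.
-/

namespace Kernel

variable {V : Type} {B X : Set (PropForm V)} {α : PropForm V}

theorem mono {C : Set (PropForm V)} (hBC : B ⊆ C) : Kernel B α ⊆ Kernel C α :=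
  fun _ ⟨hXB, hXα, hmin⟩ => ⟨hXB.trans hBC, hXα, hmin⟩

theorem nonempty_of_mem (hα : ¬ Entails ∅ α) (hX : X ∈ Kernel B α) : X.Nonempty :=
  Set.nonempty_iff_ne_empty.2 fun hempty => hα (hempty ▸ hX.2.1)

theorem nonempty_of_entails (hB : B.Finite) (hBα : Entails B α) : (Kernel B α).Nonempty := by
  have hfin : {Y | Y ⊆ B ∧ Entails Y α}.Finite := hB.finite_subsets.subset fun _ hY => hY.1
  obtain ⟨X, -, hX⟩ := hfin.exists_le_minimal (a := B) ⟨subset_rfl, hBα⟩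
  exact ⟨X, hX.prop.1, hX.prop.2,
    fun Y hYX hYα => hX.not_lt ⟨hYX.subset.trans hX.prop.1, hYα⟩ hYX⟩

end Kernel

theorem kernel_contraction_success_general {V : Type} (B : Set (PropForm V)) (α : PropForm V)
    (hB : B.Finite) (hα : ¬ Entails (∅ : Set (PropForm V)) α)
    (σ : Set (Set (PropForm V)) → Set (PropForm V))
    (hσ2 : ∀ X ∈ Kernel B α, X.Nonempty → (X ∩ σ (Kernel B α)).Nonempty) :
    ¬ Entails (B \ σ (Kernel B α)) α := by
  intro hrest
  obtain ⟨X, hX⟩ := Kernel.nonempty_of_entails (hB.sdiff (t := σ (Kernel B α))) hrest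
  have hXB : X ∈ Kernel B α := Kernel.mono Set.sdiff_subset hX
  obtain ⟨φ, hφX, hφσ⟩ := hσ2 X hXB (Kernel.nonempty_of_mem hα hXB)
  exact (hX.1 hφX).2 hφσ

/-- Kernel contraction succeeds: if σ is an incision function for finite B and
α ∉ Cn(∅), then α ∉ Cn(B \ σ(B ⊥⊥ α)). -/
theorem kernel_contraction_success {V : Type} (B : Set (PropForm V)) (α : PropForm V)
    (hB : B.Finite) (hα : ¬ Entails (∅ : Set (PropForm V)) α)
    (σ : Set (Set (PropForm V)) → Set (PropForm V))
    (hσ1 : σ (Kernel B α) ⊆ ⋃₀ Kernel B α)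
    (hσ2 : ∀ X ∈ Kernel B α, X.Nonempty → (X ∩ σ (Kernel B α)).Nonempty) :
    ¬ Entails (B \ σ (Kernel B α)) α :=
  kernel_contraction_success_general B α hB hα σ hσ2
end

section
/- For any finite set B of formulas and formula α, the kernel semi-revision B?σα = (B ∪ {α}) \ σ((B ∪ {α}) ⊥⊥ ⊥) is consistent, i.e., ⊥ ∉ Cn(B?σα). -/
/-- From a finite set entailing ⊥, extract a minimal subset entailing ⊥. -/
lemma exists_min_entails {V : Type} :
    ∀ n : ℕ, ∀ S : Set (PropForm V), ∀ hS : S.Finite, hS.toFinset.card ≤ n →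
      Entails S PropForm.fls →
      ∃ X ⊆ S, Entails X PropForm.fls ∧ ∀ Y, Y ⊂ X → ¬ Entails Y PropForm.fls := by
  intro n
  induction n with
  | zero =>
    intro S hS hcard hE
    have : S = ∅ := by
      have := Finset.card_eq_zero.mp (Nat.le_zero.mp hcard)
      simpa [Set.Finite.toFinset_eq_empty] using this
    subst this
    exact ⟨∅, subset_rfl, hE, fun Y hY => (hY.2 (Set.empty_subset Y)).elim⟩
  | succ n ih =>
    intro S hS hcard hE
    by_cases hmin : ∀ Y, Y ⊂ S → ¬ Entails Y PropForm.fls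
    · exact ⟨S, subset_rfl, hE, hmin⟩
    · push_neg at hmin
      obtain ⟨Y, hYS, hYE⟩ := hmin
      have hYfin : Y.Finite := hS.subset hYS.subset
      have hc : hYfin.toFinset.card ≤ n := by
        have hlt : hYfin.toFinset.card < hS.toFinset.card :=
          Finset.card_lt_card (by simpa [Set.Finite.toFinset_ssubset_toFinset] using hYS)
        omega
      obtain ⟨X, hXY, hX⟩ := ih Y hYfin hc hYE
      exact ⟨X, hXY.trans hYS.subset, hX⟩

/-- Kernel semi-revision is consistent: ⊥ ∉ Cn(B ?σ α). -/
theorem kernel_semi_revision_consistent {V : Type} (B : Set (PropForm V)) (α : PropForm V)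
    (hB : B.Finite)
    (σ : Set (Set (PropForm V)) → Set (PropForm V))
    (hσ1 : σ (Kernel (B ∪ {α}) PropForm.fls) ⊆ ⋃₀ Kernel (B ∪ {α}) PropForm.fls)
    (hσ2 : ∀ X ∈ Kernel (B ∪ {α}) PropForm.fls, X.Nonempty →
      (X ∩ σ (Kernel (B ∪ {α}) PropForm.fls)).Nonempty) :
    Consistent ((B ∪ {α}) \ σ (Kernel (B ∪ {α}) PropForm.fls)) := by
  by_contra hcon
  set S := (B ∪ {α}) \ σ (Kernel (B ∪ {α}) PropForm.fls) with hSdef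
  have hE : Entails S PropForm.fls := by
    intro v hv
    exact hcon ⟨v, hv⟩
  have hSfin : S.Finite := (hB.union (Set.finite_singleton α)).subset Set.diff_subset
  obtain ⟨X, hXS, hXE, hXmin⟩ :=
    exists_min_entails hSfin.toFinset.card S hSfin le_rfl hE
  have hXker : X ∈ Kernel (B ∪ {α}) PropForm.fls :=
    ⟨hXS.trans Set.diff_subset, hXE, hXmin⟩
  have hXne : X.Nonempty := by
    rcases Set.eq_empty_or_nonempty X with h | h
    · exfalso
      have := hXE (fun _ => True) (by simp [h])
      simpa [PropForm.eval] using this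
    · exact h
  obtain ⟨φ, hφX, hφσ⟩ := hσ2 X hXker hXne
  exact (hXS hφX).2 hφσ
end

section
/- Δ ⊆ ASS is a diagnosis for (SD, ASS, OBS) if and only if Δ is a minimal hitting set for the collection of minimal conflict sets for (SD, ASS, OBS). -/
/-- The set of variables `A`, viewed as formulas. -/
def vars {V : Type} (A : Set V) : Set (PropForm V) := PropForm.var '' A

/-- Simplified (Reiter) diagnosis: minimal Δ ⊆ ASS with SD ∪ {OBS} ∪ (ASS \ Δ) consistent. -/
def Diagnosis {V : Type} (SD : Set (PropForm V)) (ASS : Set V) (OBS : PropForm V)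
    (Δ : Set V) : Prop :=
  Δ ⊆ ASS ∧ Consistent (SD ∪ {OBS} ∪ vars (ASS \ Δ)) ∧
    ∀ Δ', Δ' ⊂ Δ → ¬ Consistent (SD ∪ {OBS} ∪ vars (ASS \ Δ'))

/-- Original diagnosis: minimal Δ ⊆ ASS with
    SD ∪ {OBS} ∪ (ASS \ Δ) ∪ {¬p | p ∈ Δ} consistent. -/
def FullDiagnosis {V : Type} (SD : Set (PropForm V)) (ASS : Set V) (OBS : PropForm V)
    (Δ : Set V) : Prop :=
  Δ ⊆ ASS ∧
  Consistent (SD ∪ {OBS} ∪ vars (ASS \ Δ) ∪ ((fun p => (PropForm.var p).neg) '' Δ)) ∧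
    ∀ Δ', Δ' ⊂ Δ →
      ¬ Consistent (SD ∪ {OBS} ∪ vars (ASS \ Δ') ∪ ((fun p => (PropForm.var p).neg) '' Δ'))

def ConflictSet {V : Type} (SD : Set (PropForm V)) (ASS : Set V) (OBS : PropForm V)
    (Conf : Set V) : Prop :=
  Conf ⊆ ASS ∧ ¬ Consistent (SD ∪ {OBS} ∪ vars Conf)

def MinConflictSet {V : Type} (SD : Set (PropForm V)) (ASS : Set V) (OBS : PropForm V)
    (Conf : Set V) : Prop :=
  ConflictSet SD ASS OBS Conf ∧ ∀ Y, Y ⊂ Conf → ¬ ConflictSet SD ASS OBS Y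

def HittingSet {α : Type*} (C : Set (Set α)) (H : Set α) : Prop :=
  H ⊆ ⋃₀ C ∧ ∀ S ∈ C, (H ∩ S).Nonempty

def MinimalHittingSet {α : Type*} (C : Set (Set α)) (H : Set α) : Prop :=
  HittingSet C H ∧ ∀ H', H' ⊂ H → ¬ HittingSet C H'

/-!
`SD ∪ {OBS} ∪ (ASS \ Δ)` is inconsistent iff `ASS \ Δ` is a conflict set, and then, `ASS` being
finite, it contains a minimal one. Hence it is consistent iff `Δ` meets every minimal conflict
set, so diagnoses are the minimal sets meeting all minimal conflict sets. Such a minimal set lies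
in the union of the collection, since any point outside it could be dropped.
-/

def Hits {α : Type*} (C : Set (Set α)) (H : Set α) : Prop :=
  ∀ S ∈ C, (H ∩ S).Nonempty

section HittingSet

variable {α : Type*} {C : Set (Set α)} {H : Set α}

lemma Hits.diff_singleton (hH : Hits C H) {x : α} (hx : x ∉ ⋃₀ C) : Hits C (H \ {x}) := by
  intro S hS
  obtain ⟨y, hyH, hyS⟩ := hH S hS
  have hyx : y ≠ x := by rintro rfl; exact hx ⟨S, hS, hyS⟩
  exact ⟨y, ⟨hyH, hyx⟩, hyS⟩

lemma Hits.subset_sUnion_of_minimal (hH : Hits C H) (hmin : ∀ H', H' ⊂ H → ¬ Hits C H') :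
    H ⊆ ⋃₀ C := by
  intro x hx
  by_contra hxC
  exact hmin _ (Set.sdiff_singleton_ssubset.mpr hx) (hH.diff_singleton hxC)

lemma minimalHittingSet_iff :
    MinimalHittingSet C H ↔ Hits C H ∧ ∀ H', H' ⊂ H → ¬ Hits C H' := by
  constructor
  · rintro ⟨⟨hsub, hH⟩, hmin⟩
    exact ⟨hH, fun H' hH' hits' => hmin H' hH' ⟨hH'.subset.trans hsub, hits'⟩⟩
  · rintro ⟨hH, hmin⟩
    exact ⟨⟨hH.subset_sUnion_of_minimal hmin, hH⟩, fun H' hH' hits' => hmin H' hH' hits'.2⟩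

end HittingSet

section Diagnosis

variable {V : Type} {SD : Set (PropForm V)} {ASS : Set V} {OBS : PropForm V}

lemma Consistent.mono {X Y : Set (PropForm V)} (hY : Consistent Y) (h : X ⊆ Y) :
    Consistent X := by
  obtain ⟨v, hv⟩ := hY
  exact ⟨v, fun φ hφ => hv φ (h hφ)⟩

lemma ConflictSet.exists_minConflictSet_subset {Conf : Set V} (hfin : Conf.Finite)
    (hConf : ConflictSet SD ASS OBS Conf) : ∃ M ⊆ Conf, MinConflictSet SD ASS OBS M := by
  let S : Set (Set V) := {Y | Y ⊆ Conf ∧ ConflictSet SD ASS OBS Y}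
  have hS : S.Finite := hfin.finite_subsets.subset fun _ hY => hY.1
  obtain ⟨M, hMConf, hM⟩ := hS.isPWO.exists_le_minimal (a := Conf) ⟨subset_rfl, hConf⟩
  refine ⟨M, hMConf, hM.prop.2, fun Y hYM hY => hYM.not_subset ?_⟩
  exact hM.le_of_le ⟨hYM.subset.trans hMConf, hY⟩ hYM.subset

lemma sUnion_minConflictSet_subset : ⋃₀ {Y | MinConflictSet SD ASS OBS Y} ⊆ ASS := by
  rintro x ⟨Y, hY, hxY⟩
  exact hY.1.1 hxY

lemma consistent_iff_hits (hASS : ASS.Finite) (Δ : Set V) :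
    Consistent (SD ∪ {OBS} ∪ vars (ASS \ Δ)) ↔ Hits {Y | MinConflictSet SD ASS OBS Y} Δ := by
  constructor
  · intro hcons C hC
    by_contra hdisj
    have hCΔ : C ⊆ ASS \ Δ := fun x hx => ⟨hC.1.1 hx, fun hxΔ => hdisj ⟨x, hxΔ, hx⟩⟩
    exact hC.1.2 (hcons.mono (Set.union_subset_union_right _ (Set.image_mono hCΔ)))
  · intro hhits
    by_contra hincons
    obtain ⟨M, hMsub, hM⟩ := ConflictSet.exists_minConflictSet_subset
      (hASS.subset Set.sdiff_subset) ⟨Set.sdiff_subset, hincons⟩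
    obtain ⟨x, hxΔ, hxM⟩ := hhits M hM
    exact (hMsub hxM).2 hxΔ

end Diagnosis

theorem diagnosis_iff_minimal_hitting_set_general {V : Type} (SD : Set (PropForm V)) (ASS : Set V)
    (OBS : PropForm V) (hASS : ASS.Finite) (Δ : Set V) :
    Diagnosis SD ASS OBS Δ ↔
      MinimalHittingSet {Y | MinConflictSet SD ASS OBS Y} Δ := by
  simp only [Diagnosis, minimalHittingSet_iff, consistent_iff_hits hASS]
  exact ⟨fun h => h.2, fun h =>
    ⟨(h.1.subset_sUnion_of_minimal h.2).trans sUnion_minConflictSet_subset, h⟩⟩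

/-- Reiter's theorem: Δ ⊆ ASS is a diagnosis iff Δ is a minimal hitting set
for the collection of minimal conflict sets. -/
theorem diagnosis_iff_minimal_hitting_set {V : Type} (SD : Set (PropForm V)) (ASS : Set V)
    (OBS : PropForm V) (hSD : SD.Finite) (hASS : ASS.Finite) (Δ : Set V) :
    Diagnosis SD ASS OBS Δ ↔
      MinimalHittingSet {Y | MinConflictSet SD ASS OBS Y} Δ :=
  diagnosis_iff_minimal_hitting_set_general SD ASS OBS hASS Δ
end
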